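/- arXiv:1603.09280 — 2 statements merged into one kernel-verified Lean document; each statement's English description precedes it below -/
import Mathlib

section
/- Let (H,R) be quasi-triangular, A a left H-module algebra, and F a normalized cocycle twist. If A is braided commutative with respect to R (i.e. a·b = (R₂ ▷ b)·(R₁ ▷ a)), then the twisted algebra A_F with product a ⋆_F b = (F̄₁ ▷ a)·(F̄₂ ▷ b) is braided commutative with respect to the twisted R-matrix R^F = F₂₁RF⁻¹, i.e. a ⋆_F b = (R^F₂ ▷ b) ⋆_F (R^F₁ ▷ a). -/
/-!
View `a ⋆_G b = (G₁ ▷ a)(G₂ ▷ b)` as a linear function of `G ∈ H ⊗ H`. Applying braided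
commutativity of `A` termwise gives `a ⋆_G b = b ⋆_{R₂₁ G₂₁} a`, and right multiplication of
`G` by `u ⊗ v` amounts to acting by `u` on `a` and by `v` on `b`. For `G = F⁻¹` one has
`R₂₁ F⁻¹₂₁ = F⁻¹ (F₂₁ R F⁻¹)₂₁ = F⁻¹ (R^F)₂₁`, so `a ⋆_F b = Σ (R^F₂ ▷ b) ⋆_F (R^F₁ ▷ a)`.
-/

open TensorProduct

/-- Embedding of `H ⊗ H` into the first and second factors of `H ⊗ H ⊗ H`. -/
noncomputable def leg12 (K H : Type) [CommRing K] [Ring H] [Algebra K H] :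
    H ⊗[K] H →ₐ[K] H ⊗[K] (H ⊗[K] H) :=
  Algebra.TensorProduct.map (AlgHom.id K H) Algebra.TensorProduct.includeLeft

/-- Embedding of `H ⊗ H` into the second and third factors of `H ⊗ H ⊗ H`. -/
noncomputable def leg23 (K H : Type) [CommRing K] [Ring H] [Algebra K H] :
    H ⊗[K] H →ₐ[K] H ⊗[K] (H ⊗[K] H) :=
  Algebra.TensorProduct.includeRight

/-- Embedding of `H ⊗ H` into the first and third factors of `H ⊗ H ⊗ H`. -/
noncomputable def leg13 (K H : Type) [CommRing K] [Ring H] [Algebra K H] :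
    H ⊗[K] H →ₐ[K] H ⊗[K] (H ⊗[K] H) :=
  Algebra.TensorProduct.map (AlgHom.id K H) Algebra.TensorProduct.includeRight

/-- `Δ ⊗ id` as a map `H ⊗ H → H ⊗ (H ⊗ H)`. -/
noncomputable def copL (K H : Type) [CommRing K] [Ring H] [Bialgebra K H] :
    H ⊗[K] H →ₗ[K] H ⊗[K] (H ⊗[K] H) :=
  (TensorProduct.assoc K H H H).toLinearMap ∘ₗ
    TensorProduct.map Coalgebra.comul LinearMap.id

/-- `id ⊗ Δ` as a map `H ⊗ H → H ⊗ (H ⊗ H)`. -/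
noncomputable def copR (K H : Type) [CommRing K] [Ring H] [Bialgebra K H] :
    H ⊗[K] H →ₗ[K] H ⊗[K] (H ⊗[K] H) :=
  TensorProduct.map LinearMap.id Coalgebra.comul

/-- `ε ⊗ id : H ⊗ H → H`. -/
noncomputable def ctL (K H : Type) [CommRing K] [Ring H] [Bialgebra K H] :
    H ⊗[K] H →ₗ[K] H :=
  (TensorProduct.lid K H).toLinearMap ∘ₗ TensorProduct.map Coalgebra.counit LinearMap.id

/-- `id ⊗ ε : H ⊗ H → H`. -/
noncomputable def ctR (K H : Type) [CommRing K] [Ring H] [Bialgebra K H] :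
    H ⊗[K] H →ₗ[K] H :=
  (TensorProduct.rid K H).toLinearMap ∘ₗ TensorProduct.map LinearMap.id Coalgebra.counit
/-- The twisted star product `a ⋆_F b = (F̄₁ ▷ a) · (F̄₂ ▷ b)` determined by the
action `act` and the inverse twist `Finv`. -/
noncomputable def starF {K H A : Type} [CommRing K] [Ring H] [Bialgebra K H]
    [Ring A] [Algebra K A]
    (act : H →ₗ[K] A →ₗ[K] A) (Finv : H ⊗[K] H) (a b : A) : A :=
  LinearMap.mul' K A ((TensorProduct.map (act.flip a) (act.flip b)) Finv)

/-- For `G = Σ G₁ ⊗ G₂ ∈ H ⊗ H`, the element `Σ (G₂ ▷ a) ⊗ G₁` of `A ⊗ H`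
(e.g. the target map `t(a) = (R₂ ▷ a) ⋊ R₁` of the smash product bialgebroid). -/
noncomputable def tmap {K H A : Type} [CommRing K] [Ring H] [Bialgebra K H]
    [Ring A] [Algebra K A]
    (act : H →ₗ[K] A →ₗ[K] A) (a : A) (G : H ⊗[K] H) : A ⊗[K] H :=
  (TensorProduct.comm K H A) ((TensorProduct.map LinearMap.id (act.flip a)) G)

/-- The bialgebroid counit `ε̃(a ⋊ L) = ε(L) a` of the smash product `A ⋊ H`. -/
noncomputable def epsSm (K H A : Type) [CommRing K] [Ring H] [Bialgebra K H]
    [Ring A] [Algebra K A] : A ⊗[K] H →ₗ[K] A :=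
  (TensorProduct.rid K A).toLinearMap ∘ₗ TensorProduct.map LinearMap.id Coalgebra.counit

theorem TensorProduct.exists_fin_sum_tmul {K M N : Type} [CommRing K] [AddCommGroup M]
    [Module K M] [AddCommGroup N] [Module K N] (x : M ⊗[K] N) :
    ∃ (n : ℕ) (f : Fin n → M) (g : Fin n → N), x = ∑ i, f i ⊗ₜ[K] g i := by
  obtain ⟨S, rfl⟩ := TensorProduct.exists_finset x
  refine ⟨S.card, fun i ↦ (S.equivFin.symm i).1.1, fun i ↦ (S.equivFin.symm i).1.2, ?_⟩
  rw [← Finset.sum_coe_sort, ← S.equivFin.symm.sum_comp]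

section StarProduct

variable {K H A : Type} [CommRing K] [Ring H] [Algebra K H] [Ring A] [Algebra K A]
  (act : H →ₗ[K] A →ₗ[K] A)

noncomputable def starFₗ (a b : A) : H ⊗[K] H →ₗ[K] A :=
  LinearMap.mul' K A ∘ₗ TensorProduct.map (act.flip a) (act.flip b)

@[simp]
theorem starFₗ_tmul (a b : A) (x y : H) : starFₗ act a b (x ⊗ₜ[K] y) = act x a * act y b :=
  rfl

variable {act}

theorem starFₗ_mul_tmul (hact_mul : ∀ (L J : H) (a : A), act (L * J) a = act L (act J a))
    (a b : A) (G : H ⊗[K] H) (u v : H) :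
    starFₗ act a b (G * (u ⊗ₜ[K] v)) = starFₗ act (act u a) (act v b) G := by
  induction G with
  | zero => simp
  | tmul x y => simp [Algebra.TensorProduct.tmul_mul_tmul, hact_mul]
  | add p q hp hq => rw [add_mul, map_add, map_add, hp, hq]

theorem mul_eq_starFₗ_comm_of_braided {R : H ⊗[K] H}
    (hbr : ∀ (a b : A) (n : ℕ) (r1 r2 : Fin n → H),
      R = ∑ i, r1 i ⊗ₜ[K] r2 i → a * b = ∑ i, act (r2 i) b * act (r1 i) a)
    (a b : A) : a * b = starFₗ act b a (Algebra.TensorProduct.comm K H H R) := by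
  obtain ⟨n, r1, r2, hR⟩ := TensorProduct.exists_fin_sum_tmul R
  simp [hbr a b n r1 r2 hR, hR]

theorem starFₗ_eq_starFₗ_swap {R : H ⊗[K] H}
    (hact_mul : ∀ (L J : H) (a : A), act (L * J) a = act L (act J a))
    (hbr : ∀ a b : A, a * b = starFₗ act b a (Algebra.TensorProduct.comm K H H R))
    (a b : A) (G : H ⊗[K] H) :
    starFₗ act a b G =
      starFₗ act b a (Algebra.TensorProduct.comm K H H R * Algebra.TensorProduct.comm K H H G) := by
  induction G with
  | zero => simp
  | tmul x y =>
    rw [starFₗ_tmul, hbr, Algebra.TensorProduct.comm_tmul, starFₗ_mul_tmul hact_mul]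
  | add p q hp hq => rw [map_add, map_add, mul_add, map_add, hp, hq]

end StarProduct

theorem starF_eq_starFₗ {K H A : Type} [CommRing K] [Ring H] [Bialgebra K H] [Ring A]
    [Algebra K A] (act : H →ₗ[K] A →ₗ[K] A) (G : H ⊗[K] H) (a b : A) :
    starF act G a b = starFₗ act a b G :=
  rfl

theorem twisted_algebra_braided_commutative_general
    {K H A : Type} [CommRing K] [Ring H] [Bialgebra K H] [Ring A] [Algebra K A]
    (act : H →ₗ[K] A →ₗ[K] A)
    (hact_mul : ∀ (L J : H) (a : A), act (L * J) a = act L (act J a))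
    -- quasi-triangularity of (H, R)
    (R : H ⊗[K] H)
    -- A is braided commutative w.r.t. R
    (hbr : ∀ (a b : A) (n : ℕ) (r1 r2 : Fin n → H),
      R = ∑ i, r1 i ⊗ₜ[K] r2 i → a * b = ∑ i, act (r2 i) b * act (r1 i) a)
    -- F is a normalized cocycle twist
    (F Finv : H ⊗[K] H)
    (hinv₂ : Finv * F = 1) :
    -- A_F is braided commutative w.r.t. R^F = F₂₁ R F⁻¹
    ∀ (a b : A) (n : ℕ) (r1 r2 : Fin n → H),
      TensorProduct.comm K H H F * R * Finv = ∑ i, r1 i ⊗ₜ[K] r2 i →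
      starF act Finv a b = ∑ i, starF act Finv (act (r2 i) b) (act (r1 i) a) := by
  intro a b n r1 r2 hRF
  set τ := Algebra.TensorProduct.comm K H H
  have hRF_swap : Finv * τ (∑ i, r1 i ⊗ₜ[K] r2 i) = τ R * τ Finv := by
    rw [← hRF, map_mul, map_mul]
    have hττ : τ (TensorProduct.comm K H H F) = F :=
      (TensorProduct.comm K H H).symm_apply_apply F
    rw [hττ, ← mul_assoc, ← mul_assoc, hinv₂, one_mul]
  calc starF act Finv a b
      = starFₗ act b a (τ R * τ Finv) := by
        rw [starF_eq_starFₗ]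
        exact starFₗ_eq_starFₗ_swap hact_mul (mul_eq_starFₗ_comm_of_braided hbr) a b Finv
    _ = ∑ i, starFₗ act b a (Finv * (r2 i ⊗ₜ[K] r1 i)) := by
        rw [← hRF_swap, map_sum, Finset.mul_sum, map_sum]
        simp only [τ, Algebra.TensorProduct.comm_tmul]
    _ = ∑ i, starF act Finv (act (r2 i) b) (act (r1 i) a) := by
        simp only [starFₗ_mul_tmul hact_mul, starF_eq_starFₗ]

/-- if `A` is braided commutative w.r.t. `R`, then the twisted
algebra `A_F` is braided commutative w.r.t. `R^F = F₂₁ R F⁻¹`: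
`a ⋆_F b = (R^F₂ ▷ b) ⋆_F (R^F₁ ▷ a)`. -/
theorem twisted_algebra_braided_commutative
    {K H A : Type} [CommRing K] [Ring H] [Bialgebra K H] [Ring A] [Algebra K A]
    (act : H →ₗ[K] A →ₗ[K] A)
    (hact_one : ∀ a : A, act 1 a = a)
    (hact_mul : ∀ (L J : H) (a : A), act (L * J) a = act L (act J a))
    (hact_unit : ∀ L : H, act L (1 : A) = Coalgebra.counit (R := K) L • (1 : A))
    (hact_alg : ∀ (L : H) (a b : A) (n : ℕ) (L1 L2 : Fin n → H),
      Coalgebra.comul (R := K) L = ∑ i, L1 i ⊗ₜ[K] L2 i →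
      act L (a * b) = ∑ i, act (L1 i) a * act (L2 i) b)
    -- quasi-triangularity of (H, R)
    (R Rinv : H ⊗[K] H)
    (hR₁ : R * Rinv = 1) (hR₂ : Rinv * R = 1)
    (hRΔ : ∀ x : H,
      R * Coalgebra.comul (R := K) x * Rinv =
        TensorProduct.comm K H H (Coalgebra.comul (R := K) x))
    (hhex₁ : copL K H R = leg13 K H R * leg23 K H R)
    (hhex₂ : copR K H R = leg13 K H R * leg12 K H R)
    -- A is braided commutative w.r.t. R
    (hbr : ∀ (a b : A) (n : ℕ) (r1 r2 : Fin n → H),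
      R = ∑ i, r1 i ⊗ₜ[K] r2 i → a * b = ∑ i, act (r2 i) b * act (r1 i) a)
    -- F is a normalized cocycle twist
    (F Finv : H ⊗[K] H)
    (hinv₁ : F * Finv = 1) (hinv₂ : Finv * F = 1)
    (hcoc : leg12 K H F * copL K H F = leg23 K H F * copR K H F)
    (hnorm₁ : ctL K H F = 1) (hnorm₂ : ctR K H F = 1) :
    -- A_F is braided commutative w.r.t. R^F = F₂₁ R F⁻¹
    ∀ (a b : A) (n : ℕ) (r1 r2 : Fin n → H),
      TensorProduct.comm K H H F * R * Finv = ∑ i, r1 i ⊗ₜ[K] r2 i →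
      starF act Finv a b = ∑ i, starF act Finv (act (r2 i) b) (act (r1 i) a) :=
  twisted_algebra_braided_commutative_general act hact_mul R hbr F Finv hinv₂
end

section
/- Let (H,R) be quasi-triangular, A braided commutative over (H,R), and F a normalized cocycle twist on H. Then the bialgebroid A_F⋊H^F obtained by the Brzeziński–Militaru construction from the twisted data (H^F, R^F, A_F) is isomorphic (as an A_F-bialgebroid, via φ(a⋊L) = (F̄₁▷a)⋊F̄₂L) to the bialgebroid (A⋊H)^F̃ obtained by Xu-twisting the Brzeziński–Militaru bialgebroid A⋊H by the lifted twist F̃ = (1_A⋊F₁)⊗_A(1_A⋊F₂); in particular (φ⊗_{A_F}φ)∘Δ̃^F = Δ̃_F̃∘φ, φ∘s^F = s_F̃, φ∘t^F = t_F̃, and ε̃∘φ = ε̃. -/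
/-!
Write `Φ_G (c ⋊ M) = (G₁ ▷ c) ⋊ G₂M`, so that `φ = Φ_{F⁻¹}` and `ψ = Φ_F`; since
`Φ_G ∘ Φ_{G'} = Φ_{GG'}`, they are mutually inverse. Every other map in the statement sends `a ⋊ L`
(or a pair of such) to the image of an element of `H ⊗ H ⊗ H` under an evaluation map built from
the action, and `φ` acts on these elements by left multiplication with `(Δ ⊗ id)(F⁻¹)`, resp.
`F⁻¹ ⊗ 1`. Each identity thus reduces to one in `H ⊗ H ⊗ H`: multiplicativity to
`(Δ ⊗ id)(F⁻¹) (F⁻¹ ⊗ 1) (1 ⊗ F) = (id ⊗ Δ)(F⁻¹)` and compatibility with the coproducts to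
`(Δ ⊗ id)(F) (id ⊗ Δ)(F⁻¹) = (F⁻¹ ⊗ 1) (1 ⊗ F)`, both rearrangements of the cocycle condition; the
targets match because `F⁻¹ (F₂₁ R F⁻¹)₂₁ = (R F⁻¹)₂₁`. Source, unit and counit follow from
`(ε ⊗ id)(F⁻¹) = (id ⊗ ε)(F⁻¹) = 1`. The coproduct identity holds already in
`(A ⋊ H) ⊗ (A ⋊ H)`, before passing to `⊗_{A_F}`.
-/

open TensorProduct

section TensorCube

variable (K H : Type) [CommRing K] [Ring H] [Bialgebra K H]

noncomputable def copLAlgHom : H ⊗[K] H →ₐ[K] H ⊗[K] (H ⊗[K] H) :=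
  (Algebra.TensorProduct.assoc K K K H H H).toAlgHom.comp
    (Algebra.TensorProduct.map (Bialgebra.comulAlgHom K H) (AlgHom.id K H))

noncomputable def copRAlgHom : H ⊗[K] H →ₐ[K] H ⊗[K] (H ⊗[K] H) :=
  Algebra.TensorProduct.map (AlgHom.id K H) (Bialgebra.comulAlgHom K H)

noncomputable def ctLAlgHom : H ⊗[K] H →ₐ[K] H :=
  (Algebra.TensorProduct.lid K H).toAlgHom.comp
    (Algebra.TensorProduct.map (Bialgebra.counitAlgHom K H) (AlgHom.id K H))

noncomputable def ctRAlgHom : H ⊗[K] H →ₐ[K] H :=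
  (Algebra.TensorProduct.rid K K H).toAlgHom.comp
    (Algebra.TensorProduct.map (AlgHom.id K H) (Bialgebra.counitAlgHom K H))

theorem copL_mul (x y : H ⊗[K] H) : copL K H (x * y) = copL K H x * copL K H y :=
  map_mul (copLAlgHom K H) x y

theorem copL_one : copL K H 1 = 1 := map_one (copLAlgHom K H)

theorem copR_mul (x y : H ⊗[K] H) : copR K H (x * y) = copR K H x * copR K H y :=
  map_mul (copRAlgHom K H) x y

theorem copR_one : copR K H 1 = 1 := map_one (copRAlgHom K H)

theorem ctL_mul (x y : H ⊗[K] H) : ctL K H (x * y) = ctL K H x * ctL K H y :=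
  map_mul (ctLAlgHom K H) x y

theorem ctL_one : ctL K H 1 = 1 := map_one (ctLAlgHom K H)

theorem ctR_mul (x y : H ⊗[K] H) : ctR K H (x * y) = ctR K H x * ctR K H y :=
  map_mul (ctRAlgHom K H) x y

theorem ctR_one : ctR K H 1 = 1 := map_one (ctRAlgHom K H)

theorem comm_mul (x y : H ⊗[K] H) :
    TensorProduct.comm K H H (x * y) = TensorProduct.comm K H H x * TensorProduct.comm K H H y :=
  map_mul (Algebra.TensorProduct.comm K H H) x y

theorem ctL_comul (M : H) : ctL K H (Coalgebra.comul (R := K) M) = M := by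
  simp [ctL, ← LinearMap.rTensor_def, Coalgebra.rTensor_counit_comul]

theorem copL_one_tmul (z : H) : copL K H (1 ⊗ₜ z) = 1 ⊗ₜ (1 ⊗ₜ z) := by
  simp [copL, Algebra.TensorProduct.one_def]

theorem copR_one_tmul (L : H) : copR K H (1 ⊗ₜ L) = leg23 K H (Coalgebra.comul (R := K) L) := by
  simp [copR, leg23]

theorem assoc_tmul_mul_assoc_tmul (p p' : H ⊗[K] H) (q q' : H) :
    TensorProduct.assoc K H H H (p ⊗ₜ q) * TensorProduct.assoc K H H H (p' ⊗ₜ q') =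
      TensorProduct.assoc K H H H ((p * p') ⊗ₜ (q * q')) := by
  rw [← Algebra.TensorProduct.tmul_mul_tmul]
  exact (map_mul (Algebra.TensorProduct.assoc K K K H H H) (p ⊗ₜ q) (p' ⊗ₜ q')).symm

theorem leg12_eq_assoc (G : H ⊗[K] H) : leg12 K H G = TensorProduct.assoc K H H H (G ⊗ₜ 1) := by
  induction G using TensorProduct.induction_on with
  | zero => simp
  | tmul x y => simp [leg12]
  | add G G' hG hG' => simp [hG, hG', add_tmul]

end TensorCube

section Cocycle

variable {K H : Type} [CommRing K] [Ring H] [Bialgebra K H] {F Finv : H ⊗[K] H}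

theorem copL_mul_copR_inv (hinv₁ : F * Finv = 1) (hinv₂ : Finv * F = 1)
    (hcoc : leg12 K H F * copL K H F = leg23 K H F * copR K H F) :
    copL K H F * copR K H Finv = leg12 K H Finv * leg23 K H F :=
  calc copL K H F * copR K H Finv
      = leg12 K H Finv * (leg12 K H F * copL K H F) * copR K H Finv := by
        rw [← mul_assoc, ← map_mul, hinv₂, map_one, one_mul]
    _ = leg12 K H Finv * leg23 K H F * (copR K H F * copR K H Finv) := by
        rw [hcoc]; simp only [mul_assoc]
    _ = leg12 K H Finv * leg23 K H F := by rw [← copR_mul, hinv₁, copR_one, mul_one]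

theorem copL_inv_mul_leg12_inv_mul_leg23 (hinv₁ : F * Finv = 1) (hinv₂ : Finv * F = 1)
    (hcoc : leg12 K H F * copL K H F = leg23 K H F * copR K H F) :
    copL K H Finv * leg12 K H Finv * leg23 K H F = copR K H Finv := by
  rw [mul_assoc, ← copL_mul_copR_inv hinv₁ hinv₂ hcoc, ← mul_assoc, ← copL_mul, hinv₂,
    copL_one, one_mul]

end Cocycle

theorem eq_map_of_forall_eq_sum {R M N P Q : Type*} [CommSemiring R] [AddCommMonoid M]
    [AddCommMonoid N] [AddCommMonoid P] [AddCommMonoid Q] [Module R M] [Module R N] [Module R P]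
    [Module R Q] (f : M →ₗ[R] P) (g : N →ₗ[R] Q) {z : M ⊗[R] N} {x : P ⊗[R] Q}
    (h : ∀ (n : ℕ) (u : Fin n → M) (v : Fin n → N),
      z = ∑ i, u i ⊗ₜ[R] v i → x = ∑ i, f (u i) ⊗ₜ[R] g (v i)) :
    x = map f g z := by
  obtain ⟨n, u, v, rfl⟩ := exists_sum_tmul_eq z
  simp [h n u v rfl]

section SmashProduct

variable {K H A : Type} [CommRing K] [Ring H] [Bialgebra K H] [Ring A] [Algebra K A]

noncomputable def actLeft (act : H →ₗ[K] A →ₗ[K] A) : A →ₗ[K] H ⊗[K] H →ₗ[K] A ⊗[K] H :=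
  (TensorProduct.mapBilinear (RingHom.id K) H H A H).flip LinearMap.id ∘ₗ act.flip

noncomputable def twistMap (act : H →ₗ[K] A →ₗ[K] A) (G : H ⊗[K] H) :
    A ⊗[K] H →ₗ[K] A ⊗[K] H :=
  lift ((actLeft act).compl₂
    (LinearMap.mulLeft K G ∘ₗ (Algebra.TensorProduct.includeRight : H →ₐ[K] H ⊗[K] H).toLinearMap))

noncomputable def actMulEval (act : H →ₗ[K] A →ₗ[K] A) (a b : A) :
    H ⊗[K] (H ⊗[K] H) →ₗ[K] A ⊗[K] H :=
  map (LinearMap.mul' K A ∘ₗ map (act.flip a) (act.flip b)) LinearMap.id ∘ₗ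
    (TensorProduct.assoc K H H H).symm.toLinearMap

noncomputable def actComulEval (act : H →ₗ[K] A →ₗ[K] A) (a : A) :
    H ⊗[K] (H ⊗[K] H) →ₗ[K] (A ⊗[K] H) ⊗[K] (A ⊗[K] H) :=
  map (map (act.flip a) LinearMap.id) (TensorProduct.mk K A H 1) ∘ₗ
    (TensorProduct.assoc K H H H).symm.toLinearMap

variable {act : H →ₗ[K] A →ₗ[K] A}

@[simp]
theorem actLeft_tmul (c : A) (x y : H) : actLeft act c (x ⊗ₜ y) = act x c ⊗ₜ y := rfl

theorem actLeft_apply (c : A) (w : H ⊗[K] H) : actLeft act c w = map (act.flip c) LinearMap.id w :=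
  rfl

@[simp]
theorem twistMap_tmul (G : H ⊗[K] H) (c : A) (M : H) :
    twistMap act G (c ⊗ₜ M) = actLeft act c (G * (1 ⊗ₜ M)) := rfl

@[simp]
theorem actMulEval_tmul (a b : A) (x y z : H) :
    actMulEval act a b (x ⊗ₜ (y ⊗ₜ z)) = (act x a * act y b) ⊗ₜ z := rfl

@[simp]
theorem actComulEval_tmul (a : A) (x y z : H) :
    actComulEval act a (x ⊗ₜ (y ⊗ₜ z)) = (act x a ⊗ₜ y) ⊗ₜ ((1 : A) ⊗ₜ z) := rfl

theorem map_flip_mulRight_eq_actLeft (c : A) (M : H) (w : H ⊗[K] H) :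
    map (act.flip c) (LinearMap.mulRight K M) w = actLeft act c (w * (1 ⊗ₜ M)) := by
  induction w using TensorProduct.induction_on with
  | zero => simp
  | tmul x y => simp
  | add w w' hw hw' => simp [hw, hw', add_mul]

theorem eq_twistMap {G : H ⊗[K] H} {φ : A ⊗[K] H →ₗ[K] A ⊗[K] H}
    (hφ : ∀ (a : A) (L : H) (n : ℕ) (g1 g2 : Fin n → H), G = ∑ i, g1 i ⊗ₜ[K] g2 i →
      φ (a ⊗ₜ[K] L) = ∑ i, act (g1 i) a ⊗ₜ[K] (g2 i * L)) :
    φ = twistMap act G := by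
  ext a L
  simpa [map_flip_mulRight_eq_actLeft] using
    eq_map_of_forall_eq_sum (act.flip a) (LinearMap.mulRight K L) (hφ a L)

theorem actLeft_act (hact_mul : ∀ (L J : H) (a : A), act (L * J) a = act L (act J a))
    (x : H) (c : A) (w : H ⊗[K] H) :
    actLeft act (act x c) w = actLeft act c (w * (x ⊗ₜ 1)) := by
  induction w using TensorProduct.induction_on with
  | zero => simp
  | tmul y z => simp [hact_mul]
  | add w w' hw hw' => simp [hw, hw', add_mul]

theorem twistMap_actLeft (hact_mul : ∀ (L J : H) (a : A), act (L * J) a = act L (act J a))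
    (G : H ⊗[K] H) (c : A) (w : H ⊗[K] H) :
    twistMap act G (actLeft act c w) = actLeft act c (G * w) := by
  induction w using TensorProduct.induction_on with
  | zero => simp
  | tmul x y =>
    rw [actLeft_tmul, twistMap_tmul, actLeft_act hact_mul, mul_assoc,
      Algebra.TensorProduct.tmul_mul_tmul, one_mul, mul_one]
  | add w w' hw hw' => simp [hw, hw', mul_add]

theorem twistMap_twistMap (hact_mul : ∀ (L J : H) (a : A), act (L * J) a = act L (act J a))
    (G G' : H ⊗[K] H) (x : A ⊗[K] H) :
    twistMap act G (twistMap act G' x) = twistMap act (G * G') x := by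
  induction x using TensorProduct.induction_on with
  | zero => simp
  | tmul c M => simp [twistMap_actLeft hact_mul, mul_assoc]
  | add x x' hx hx' => simp [hx, hx']

theorem twistMap_one (hact_one : ∀ a : A, act 1 a = a) (x : A ⊗[K] H) :
    twistMap act 1 x = x := by
  induction x using TensorProduct.induction_on with
  | zero => simp
  | tmul c M => simp [hact_one]
  | add x x' hx hx' => simp [hx, hx']

theorem actLeft_one (hact_unit : ∀ L : H, act L (1 : A) = Coalgebra.counit (R := K) L • (1 : A))
    (w : H ⊗[K] H) : actLeft act 1 w = 1 ⊗ₜ ctL K H w := by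
  induction w using TensorProduct.induction_on with
  | zero => simp
  | tmul x y => simp [ctL, hact_unit, TensorProduct.smul_tmul]
  | add w w' hw hw' => simp [hw, hw', tmul_add]

theorem twistMap_one_tmul
    (hact_unit : ∀ L : H, act L (1 : A) = Coalgebra.counit (R := K) L • (1 : A))
    {G : H ⊗[K] H} (hG : ctL K H G = 1) (M : H) :
    twistMap act G (1 ⊗ₜ M) = 1 ⊗ₜ M := by
  rw [twistMap_tmul, actLeft_one hact_unit, ctL_mul, hG, one_mul]
  simp [ctL]

theorem epsSm_actLeft (c : A) (w : H ⊗[K] H) :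
    epsSm K H A (actLeft act c w) = act (ctR K H w) c := by
  induction w using TensorProduct.induction_on with
  | zero => simp
  | tmul x y => simp [epsSm, ctR]
  | add w w' hw hw' => simp [hw, hw']

theorem epsSm_twistMap (hact_one : ∀ a : A, act 1 a = a) {G : H ⊗[K] H} (hG : ctR K H G = 1)
    (x : A ⊗[K] H) : epsSm K H A (twistMap act G x) = epsSm K H A x := by
  induction x using TensorProduct.induction_on with
  | zero => simp
  | tmul c M =>
    rw [twistMap_tmul, epsSm_actLeft, ctR_mul, hG, one_mul]
    simp [ctR, epsSm, hact_one]
  | add x x' hx hx' => simp [hx, hx']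

theorem tmap_eq_actLeft (a : A) (G : H ⊗[K] H) :
    tmap act a G = actLeft act a (TensorProduct.comm K H H G) := by
  rw [actLeft_apply, map_comm]
  rfl

theorem twistMap_tmap (hact_mul : ∀ (L J : H) (a : A), act (L * J) a = act L (act J a))
    {F Finv : H ⊗[K] H} (hinv₂ : Finv * F = 1) (R : H ⊗[K] H) (a : A) :
    twistMap act Finv (tmap act a (TensorProduct.comm K H H F * R * Finv)) =
      tmap act a (R * Finv) := by
  rw [tmap_eq_actLeft, tmap_eq_actLeft, twistMap_actLeft hact_mul, comm_mul, comm_mul,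
    TensorProduct.comm_comm, ← mul_assoc, ← mul_assoc, hinv₂, one_mul, comm_mul]

theorem actLeft_mul
    (hact_alg : ∀ (L : H) (a b : A),
      act L (a * b) = LinearMap.mul' K A (map (act.flip a) (act.flip b) (Coalgebra.comul L)))
    (c d : A) (w : H ⊗[K] H) :
    actLeft act (c * d) w = actMulEval act c d (copL K H w) := by
  induction w using TensorProduct.induction_on with
  | zero => simp
  | add w w' hw hw' => simp [hw, hw']
  | tmul x y =>
    simp only [actLeft_tmul, hact_alg, copL, LinearMap.comp_apply, map_tmul, LinearMap.id_apply,
      LinearEquiv.coe_coe]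
    induction Coalgebra.comul (R := K) x using TensorProduct.induction_on with
    | zero => simp
    | tmul u v => simp
    | add s s' hs hs' => simp [add_tmul, hs, hs']

theorem actMulEval_act (hact_mul : ∀ (L J : H) (a : A), act (L * J) a = act L (act J a))
    (x y : H) (a b : A) (t : H ⊗[K] (H ⊗[K] H)) :
    actMulEval act (act x a) (act y b) t = actMulEval act a b (t * (x ⊗ₜ (y ⊗ₜ 1))) := by
  suffices actMulEval act (act x a) (act y b) =
      actMulEval act a b ∘ₗ LinearMap.mulRight K (x ⊗ₜ (y ⊗ₜ 1)) from LinearMap.congr_fun this t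
  refine TensorProduct.ext_threefold' fun u v z => ?_
  simp [hact_mul]

theorem twistMap_actMulEval (hact_mul : ∀ (L J : H) (a : A), act (L * J) a = act L (act J a))
    (hact_alg : ∀ (L : H) (a b : A),
      act L (a * b) = LinearMap.mul' K A (map (act.flip a) (act.flip b) (Coalgebra.comul L)))
    (G : H ⊗[K] H) (a b : A) (t : H ⊗[K] (H ⊗[K] H)) :
    twistMap act G (actMulEval act a b t) = actMulEval act a b (copL K H G * t) := by
  suffices twistMap act G ∘ₗ actMulEval act a b =
      actMulEval act a b ∘ₗ LinearMap.mulLeft K (copL K H G) from LinearMap.congr_fun this t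
  refine TensorProduct.ext_threefold' fun x y z => ?_
  simp only [LinearMap.comp_apply, actMulEval_tmul, twistMap_tmul, actLeft_mul hact_alg,
    actMulEval_act hact_mul, copL_mul, copL_one_tmul, mul_assoc,
    Algebra.TensorProduct.tmul_mul_tmul, one_mul, mul_one, LinearMap.mulLeft_apply]

theorem smashMul_actLeft_actLeft
    (hact_mul : ∀ (L J : H) (a : A), act (L * J) a = act L (act J a))
    {m : (A ⊗[K] H) →ₗ[K] (A ⊗[K] H) →ₗ[K] (A ⊗[K] H)}
    (hm : ∀ (a b : A) (L J : H), m (a ⊗ₜ L) (b ⊗ₜ J) =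
      map (LinearMap.mulLeft K a ∘ₗ act.flip b) (LinearMap.mulRight K J) (Coalgebra.comul L))
    (a b : A) (u w : H ⊗[K] H) :
    m (actLeft act a u) (actLeft act b w) = actMulEval act a b (copR K H u * leg23 K H w) := by
  induction u using TensorProduct.induction_on with
  | zero => simp
  | add u u' hu hu' => simp [hu, hu', add_mul]
  | tmul x y =>
    induction w using TensorProduct.induction_on with
    | zero => simp
    | add w w' hw hw' => rw [map_add, map_add, map_add, mul_add, map_add, hw, hw']
    | tmul p q =>
      simp only [actLeft_tmul, hm, copR, leg23, map_tmul, LinearMap.id_apply,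
        Algebra.TensorProduct.includeRight_apply, Algebra.TensorProduct.tmul_mul_tmul, mul_one]
      induction Coalgebra.comul (R := K) y using TensorProduct.induction_on with
      | zero => simp
      | tmul s s' => simp [hact_mul]
      | add s s' hs hs' => simp [add_mul, tmul_add, hs, hs']

theorem starF_act_tmul (hact_mul : ∀ (L J : H) (a : A), act (L * J) a = act L (act J a))
    (G : H ⊗[K] H) (c d : A) (x z : H) :
    starF act G c (act x d) ⊗ₜ z = actMulEval act c d (leg12 K H G * leg23 K H (x ⊗ₜ z)) := by
  induction G using TensorProduct.induction_on with
  | zero => simp [starF]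
  | add G G' hG hG' =>
    simp only [starF, map_add, add_tmul, add_mul] at hG hG' ⊢
    rw [hG, hG']
  | tmul g g' => simp [starF, leg12, leg23, hact_mul]

theorem twistedMul_tmul (hact_mul : ∀ (L J : H) (a : A), act (L * J) a = act L (act J a))
    {F Finv : H ⊗[K] H} {mF : (A ⊗[K] H) →ₗ[K] (A ⊗[K] H) →ₗ[K] (A ⊗[K] H)}
    (hmF : ∀ (a b : A) (L J : H) (n : ℕ) (L1 L2 : Fin n → H),
      F * Coalgebra.comul (R := K) L * Finv = ∑ i, L1 i ⊗ₜ[K] L2 i →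
      mF (a ⊗ₜ[K] L) (b ⊗ₜ[K] J) =
        ∑ i, starF act Finv a (act (L1 i) b) ⊗ₜ[K] (L2 i * J))
    (a b : A) (L J : H) :
    mF (a ⊗ₜ L) (b ⊗ₜ J) = actMulEval act a b
      (leg12 K H Finv * leg23 K H (F * Coalgebra.comul (R := K) L * Finv * (1 ⊗ₜ J))) := by
  obtain ⟨n, X1, X2, hX⟩ := exists_sum_tmul_eq (F * Coalgebra.comul (R := K) L * Finv)
  rw [hmF a b L J n X1 X2 hX, hX]
  simp [Finset.sum_mul, Finset.mul_sum, starF_act_tmul hact_mul]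

theorem twistMap_twistedMul (hact_mul : ∀ (L J : H) (a : A), act (L * J) a = act L (act J a))
    (hact_alg : ∀ (L : H) (a b : A),
      act L (a * b) = LinearMap.mul' K A (map (act.flip a) (act.flip b) (Coalgebra.comul L)))
    {F Finv : H ⊗[K] H} (hcoc : copL K H Finv * leg12 K H Finv * leg23 K H F = copR K H Finv)
    {m : (A ⊗[K] H) →ₗ[K] (A ⊗[K] H) →ₗ[K] (A ⊗[K] H)}
    (hm : ∀ (a b : A) (L J : H), m (a ⊗ₜ L) (b ⊗ₜ J) =
      map (LinearMap.mulLeft K a ∘ₗ act.flip b) (LinearMap.mulRight K J) (Coalgebra.comul L))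
    {mF : (A ⊗[K] H) →ₗ[K] (A ⊗[K] H) →ₗ[K] (A ⊗[K] H)}
    (hmF : ∀ (a b : A) (L J : H) (n : ℕ) (L1 L2 : Fin n → H),
      F * Coalgebra.comul (R := K) L * Finv = ∑ i, L1 i ⊗ₜ[K] L2 i →
      mF (a ⊗ₜ[K] L) (b ⊗ₜ[K] J) =
        ∑ i, starF act Finv a (act (L1 i) b) ⊗ₜ[K] (L2 i * J))
    (x y : A ⊗[K] H) :
    twistMap act Finv (mF x y) = m (twistMap act Finv x) (twistMap act Finv y) := by
  induction x using TensorProduct.induction_on with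
  | zero => simp
  | add x x' hx hx' => simp only [map_add, LinearMap.add_apply, hx, hx']
  | tmul a L =>
    induction y using TensorProduct.induction_on with
    | zero => simp
    | add y y' hy hy' => simp only [map_add, hy, hy']
    | tmul b J =>
      rw [twistedMul_tmul hact_mul hmF, twistMap_actMulEval hact_mul hact_alg, twistMap_tmul,
        twistMap_tmul, smashMul_actLeft_actLeft hact_mul hm, copR_mul, copR_one_tmul, ← hcoc]
      simp only [map_mul, mul_assoc]

theorem actComulEval_assoc (a : A) (s : H ⊗[K] H) (z : H) :
    actComulEval act a (TensorProduct.assoc K H H H (s ⊗ₜ z)) = actLeft act a s ⊗ₜ (1 ⊗ₜ z) := by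
  simp [actComulEval, actLeft_apply]

theorem actComulEval_leg23 (hact_one : ∀ a : A, act 1 a = a) (a : A) (s : H ⊗[K] H) :
    actComulEval act a (leg23 K H s) =
      map (TensorProduct.mk K A H a) (TensorProduct.mk K A H 1) s := by
  induction s using TensorProduct.induction_on with
  | zero => simp
  | tmul y z => simp [leg23, hact_one]
  | add s s' hs hs' => simp [hs, hs']

theorem map_twistMap_actComulEval (hact_mul : ∀ (L J : H) (a : A), act (L * J) a = act L (act J a))
    (hact_unit : ∀ L : H, act L (1 : A) = Coalgebra.counit (R := K) L • (1 : A))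
    {G : H ⊗[K] H} (hG : ctL K H G = 1) (a : A) (t : H ⊗[K] (H ⊗[K] H)) :
    map (twistMap act G) (twistMap act G) (actComulEval act a t) =
      actComulEval act a (leg12 K H G * t) := by
  suffices map (twistMap act G) (twistMap act G) ∘ₗ actComulEval act a =
      actComulEval act a ∘ₗ LinearMap.mulLeft K (leg12 K H G) from LinearMap.congr_fun this t
  refine TensorProduct.ext_threefold' fun x y z => ?_
  have hxyz : x ⊗ₜ[K] (y ⊗ₜ[K] z) = TensorProduct.assoc K H H H ((x ⊗ₜ y) ⊗ₜ z) := rfl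
  rw [LinearMap.comp_apply, LinearMap.comp_apply, LinearMap.mulLeft_apply, hxyz,
    leg12_eq_assoc, assoc_tmul_mul_assoc_tmul, one_mul, actComulEval_assoc, actComulEval_assoc,
    map_tmul, twistMap_one_tmul hact_unit hG, ← twistMap_actLeft hact_mul, actLeft_tmul]

theorem smashComul_actLeft
    {D : (A ⊗[K] H) →ₗ[K] (A ⊗[K] H) ⊗[K] (A ⊗[K] H)}
    (hD : ∀ (a : A) (L : H),
      D (a ⊗ₜ L) = map (TensorProduct.mk K A H a) (TensorProduct.mk K A H 1) (Coalgebra.comul L))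
    (c : A) (w : H ⊗[K] H) :
    D (actLeft act c w) = actComulEval act c (copR K H w) := by
  induction w using TensorProduct.induction_on with
  | zero => simp
  | add w w' hw hw' => simp only [map_add, hw, hw']
  | tmul x y =>
    rw [actLeft_tmul, hD]
    simp only [copR, map_tmul, LinearMap.id_apply]
    induction Coalgebra.comul (R := K) y using TensorProduct.induction_on with
    | zero => simp
    | tmul s s' => simp
    | add s s' hs hs' => simp [tmul_add, hs, hs']

theorem smashMul_tmul_one_tmul
    (hact_unit : ∀ L : H, act L (1 : A) = Coalgebra.counit (R := K) L • (1 : A))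
    {m : (A ⊗[K] H) →ₗ[K] (A ⊗[K] H) →ₗ[K] (A ⊗[K] H)}
    (hm : ∀ (a b : A) (L J : H), m (a ⊗ₜ L) (b ⊗ₜ J) =
      map (LinearMap.mulLeft K a ∘ₗ act.flip b) (LinearMap.mulRight K J) (Coalgebra.comul L))
    (c : A) (M g : H) : m (c ⊗ₜ M) (1 ⊗ₜ g) = c ⊗ₜ (M * g) := by
  have key : ∀ s : H ⊗[K] H,
      map (LinearMap.mulLeft K c ∘ₗ act.flip 1) (LinearMap.mulRight K g) s =
        c ⊗ₜ (ctL K H s * g) := by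
    intro s
    induction s using TensorProduct.induction_on with
    | zero => simp
    | tmul x y => simp [ctL, hact_unit, TensorProduct.smul_tmul]
    | add s s' hs hs' => simp [hs, hs', add_mul, tmul_add]
  rw [hm, key, ctL_comul]

theorem smashMul_one_tmul_actLeft
    (hact_mul : ∀ (L J : H) (a : A), act (L * J) a = act L (act J a))
    {m : (A ⊗[K] H) →ₗ[K] (A ⊗[K] H) →ₗ[K] (A ⊗[K] H)}
    (hm : ∀ (a b : A) (L J : H), m (a ⊗ₜ L) (b ⊗ₜ J) =
      map (LinearMap.mulLeft K a ∘ₗ act.flip b) (LinearMap.mulRight K J) (Coalgebra.comul L))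
    (f : H) (c : A) (w : H ⊗[K] H) :
    m (1 ⊗ₜ f) (actLeft act c w) = actLeft act c (Coalgebra.comul f * w) := by
  induction w using TensorProduct.induction_on with
  | zero => simp
  | add w w' hw hw' => simp only [map_add, mul_add, hw, hw']
  | tmul x y =>
    rw [actLeft_tmul, hm]
    induction Coalgebra.comul (R := K) f using TensorProduct.induction_on with
    | zero => simp
    | tmul s s' => simp [hact_mul]
    | add s s' hs hs' => rw [map_add, add_mul, map_add, hs, hs']

theorem map_smashMul_flip_actComulEval
    (hact_unit : ∀ L : H, act L (1 : A) = Coalgebra.counit (R := K) L • (1 : A))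
    {m : (A ⊗[K] H) →ₗ[K] (A ⊗[K] H) →ₗ[K] (A ⊗[K] H)}
    (hm : ∀ (a b : A) (L J : H), m (a ⊗ₜ L) (b ⊗ₜ J) =
      map (LinearMap.mulLeft K a ∘ₗ act.flip b) (LinearMap.mulRight K J) (Coalgebra.comul L))
    (u v : H) (a : A) (t : H ⊗[K] (H ⊗[K] H)) :
    map (m.flip (1 ⊗ₜ u)) (m.flip (1 ⊗ₜ v)) (actComulEval act a t) =
      actComulEval act a (t * leg23 K H (u ⊗ₜ v)) := by
  suffices map (m.flip (1 ⊗ₜ u)) (m.flip (1 ⊗ₜ v)) ∘ₗ actComulEval act a =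
      actComulEval act a ∘ₗ LinearMap.mulRight K (leg23 K H (u ⊗ₜ v)) from
    LinearMap.congr_fun this t
  refine TensorProduct.ext_threefold' fun x y z => ?_
  simp [smashMul_tmul_one_tmul hact_unit hm, leg23]

theorem map_smashMul_actComulEval
    (hact_mul : ∀ (L J : H) (a : A), act (L * J) a = act L (act J a))
    (hact_unit : ∀ L : H, act L (1 : A) = Coalgebra.counit (R := K) L • (1 : A))
    {m : (A ⊗[K] H) →ₗ[K] (A ⊗[K] H) →ₗ[K] (A ⊗[K] H)}
    (hm : ∀ (a b : A) (L J : H), m (a ⊗ₜ L) (b ⊗ₜ J) =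
      map (LinearMap.mulLeft K a ∘ₗ act.flip b) (LinearMap.mulRight K J) (Coalgebra.comul L))
    (u v : H) (a : A) (t : H ⊗[K] (H ⊗[K] H)) :
    map (m (1 ⊗ₜ u)) (m (1 ⊗ₜ v)) (actComulEval act a t) =
      actComulEval act a (copL K H (u ⊗ₜ v) * t) := by
  suffices map (m (1 ⊗ₜ u)) (m (1 ⊗ₜ v)) ∘ₗ actComulEval act a =
      actComulEval act a ∘ₗ LinearMap.mulLeft K (copL K H (u ⊗ₜ v)) from
    LinearMap.congr_fun this t
  refine TensorProduct.ext_threefold' fun x y z => ?_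
  have hxyz : x ⊗ₜ[K] (y ⊗ₜ[K] z) = TensorProduct.assoc K H H H ((x ⊗ₜ y) ⊗ₜ z) := rfl
  have huv : copL K H (u ⊗ₜ v) = TensorProduct.assoc K H H H (Coalgebra.comul u ⊗ₜ v) := rfl
  rw [LinearMap.comp_apply, LinearMap.comp_apply, LinearMap.mulLeft_apply, hxyz, huv,
    assoc_tmul_mul_assoc_tmul, actComulEval_assoc, actComulEval_assoc, map_tmul,
    smashMul_tmul_one_tmul hact_unit hm, smashMul_one_tmul_actLeft hact_mul hm]

theorem map_twistMap_twistedComul (hact_one : ∀ a : A, act 1 a = a)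
    (hact_mul : ∀ (L J : H) (a : A), act (L * J) a = act L (act J a))
    (hact_unit : ∀ L : H, act L (1 : A) = Coalgebra.counit (R := K) L • (1 : A))
    {F Finv : H ⊗[K] H} (hFinv : ctL K H Finv = 1)
    (hcoc : copL K H F * copR K H Finv = leg12 K H Finv * leg23 K H F)
    {m : (A ⊗[K] H) →ₗ[K] (A ⊗[K] H) →ₗ[K] (A ⊗[K] H)}
    (hm : ∀ (a b : A) (L J : H), m (a ⊗ₜ L) (b ⊗ₜ J) =
      map (LinearMap.mulLeft K a ∘ₗ act.flip b) (LinearMap.mulRight K J) (Coalgebra.comul L))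
    {D DF : (A ⊗[K] H) →ₗ[K] (A ⊗[K] H) ⊗[K] (A ⊗[K] H)}
    (hD : ∀ (a : A) (L : H),
      D (a ⊗ₜ L) = map (TensorProduct.mk K A H a) (TensorProduct.mk K A H 1) (Coalgebra.comul L))
    (hDF : ∀ (a : A) (L : H), DF (a ⊗ₜ L) = map (TensorProduct.mk K A H a)
      (TensorProduct.mk K A H 1) (F * Coalgebra.comul (R := K) L * Finv))
    {p : ℕ} {f1 f2 : Fin p → H} (hF : F = ∑ j, f1 j ⊗ₜ[K] f2 j)
    {q : ℕ} {g1 g2 : Fin q → H} (hG : Finv = ∑ i, g1 i ⊗ₜ[K] g2 i) (x : A ⊗[K] H) :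
    map (twistMap act Finv) (twistMap act Finv) (DF x) =
      ∑ j, ∑ i, map (m (1 ⊗ₜ f1 j)) (m (1 ⊗ₜ f2 j))
        (map (m.flip (1 ⊗ₜ g1 i)) (m.flip (1 ⊗ₜ g2 i)) (D (twistMap act Finv x))) := by
  induction x using TensorProduct.induction_on with
  | zero => simp
  | add x x' hx hx' => simp only [map_add, hx, hx', Finset.sum_add_distrib]
  | tmul a L =>
    have hFsum : copL K H F = ∑ j, copL K H (f1 j ⊗ₜ f2 j) := by rw [hF, map_sum]
    have hGsum : leg23 K H Finv = ∑ i, leg23 K H (g1 i ⊗ₜ g2 i) := by rw [hG, map_sum]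
    rw [hDF, ← actComulEval_leg23 hact_one, map_twistMap_actComulEval hact_mul hact_unit hFinv,
      twistMap_tmul, smashComul_actLeft hD]
    simp only [map_smashMul_flip_actComulEval hact_unit hm,
      map_smashMul_actComulEval hact_mul hact_unit hm, ← map_sum, ← Finset.mul_sum, ← hGsum,
      ← Finset.sum_mul, ← hFsum, copR_mul, copR_one_tmul, map_mul, ← mul_assoc, hcoc]

end SmashProduct

theorem twisted_bialgebroid_isomorphism_general
    {K H A : Type} [CommRing K] [Ring H] [Bialgebra K H] [Ring A] [Algebra K A]
    (act : H →ₗ[K] A →ₗ[K] A)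
    (hact_one : ∀ a : A, act 1 a = a)
    (hact_mul : ∀ (L J : H) (a : A), act (L * J) a = act L (act J a))
    (hact_unit : ∀ L : H, act L (1 : A) = Coalgebra.counit (R := K) L • (1 : A))
    (hact_alg : ∀ (L : H) (a b : A) (n : ℕ) (L1 L2 : Fin n → H),
      Coalgebra.comul (R := K) L = ∑ i, L1 i ⊗ₜ[K] L2 i →
      act L (a * b) = ∑ i, act (L1 i) a * act (L2 i) b)
    -- quasi-triangularity of (H, R)
    (R : H ⊗[K] H)
    -- F is a normalized cocycle twist
    (F Finv : H ⊗[K] H)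
    (hinv₁ : F * Finv = 1) (hinv₂ : Finv * F = 1)
    (hcoc : leg12 K H F * copL K H F = leg23 K H F * copR K H F)
    (hnorm₁ : ctL K H F = 1) (hnorm₂ : ctR K H F = 1)
    -- the smash product multiplication of A ⋊ H
    (m : (A ⊗[K] H) →ₗ[K] (A ⊗[K] H) →ₗ[K] (A ⊗[K] H))
    (hm : ∀ (a b : A) (L J : H) (n : ℕ) (L1 L2 : Fin n → H),
      Coalgebra.comul (R := K) L = ∑ i, L1 i ⊗ₜ[K] L2 i →
      m (a ⊗ₜ[K] L) (b ⊗ₜ[K] J) = ∑ i, (a * act (L1 i) b) ⊗ₜ[K] (L2 i * J))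
    -- the smash product multiplication of A_F ⋊ H^F
    (mF : (A ⊗[K] H) →ₗ[K] (A ⊗[K] H) →ₗ[K] (A ⊗[K] H))
    (hmF : ∀ (a b : A) (L J : H) (n : ℕ) (L1 L2 : Fin n → H),
      F * Coalgebra.comul (R := K) L * Finv = ∑ i, L1 i ⊗ₜ[K] L2 i →
      mF (a ⊗ₜ[K] L) (b ⊗ₜ[K] J) =
        ∑ i, starF act Finv a (act (L1 i) b) ⊗ₜ[K] (L2 i * J))
    -- the maps φ, ψ
    (φ ψ : A ⊗[K] H →ₗ[K] A ⊗[K] H)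
    (hφ : ∀ (a : A) (L : H) (n : ℕ) (g1 g2 : Fin n → H),
      Finv = ∑ i, g1 i ⊗ₜ[K] g2 i →
      φ (a ⊗ₜ[K] L) = ∑ i, act (g1 i) a ⊗ₜ[K] (g2 i * L))
    (hψ : ∀ (a : A) (L : H) (n : ℕ) (f1 f2 : Fin n → H),
      F = ∑ i, f1 i ⊗ₜ[K] f2 i →
      ψ (a ⊗ₜ[K] L) = ∑ i, act (f1 i) a ⊗ₜ[K] (f2 i * L))
    -- the (representatives of the) coproducts Δ̃ of A ⋊ H and Δ̃^F of A_F ⋊ H^F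
    (D DF : (A ⊗[K] H) →ₗ[K] (A ⊗[K] H) ⊗[K] (A ⊗[K] H))
    (hD : ∀ (a : A) (L : H) (n : ℕ) (L1 L2 : Fin n → H),
      Coalgebra.comul (R := K) L = ∑ i, L1 i ⊗ₜ[K] L2 i →
      D (a ⊗ₜ[K] L) = ∑ i, (a ⊗ₜ[K] L1 i) ⊗ₜ[K] ((1 : A) ⊗ₜ[K] L2 i))
    (hDF : ∀ (a : A) (L : H) (n : ℕ) (L1 L2 : Fin n → H),
      F * Coalgebra.comul (R := K) L * Finv = ∑ i, L1 i ⊗ₜ[K] L2 i →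
      DF (a ⊗ₜ[K] L) = ∑ i, (a ⊗ₜ[K] L1 i) ⊗ₜ[K] ((1 : A) ⊗ₜ[K] L2 i))
    -- the submodule defining ⊗_{A_F}, built from the Xu-twisted source
    -- s_F̃(b) = (F̄₁ ▷ b) ⋊ F̄₂ and target t_F̃(b) = (R₂F̄₂' ▷ b) ⋊ R₁F̄₁'
    (IF : Submodule K ((A ⊗[K] H) ⊗[K] (A ⊗[K] H))) :
    -- (1) φ is an isomorphism of the total algebras
    (∀ x y : A ⊗[K] H, φ (mF x y) = m (φ x) (φ y)) ∧
    φ ((1 : A) ⊗ₜ[K] (1 : H)) = (1 : A) ⊗ₜ[K] (1 : H) ∧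
    (∀ x : A ⊗[K] H, ψ (φ x) = x) ∧ (∀ x : A ⊗[K] H, φ (ψ x) = x) ∧
    -- (2) φ ∘ s^F = s_F̃
    (∀ a : A, φ (a ⊗ₜ[K] (1 : H)) =
      (TensorProduct.map (act.flip a) LinearMap.id) Finv) ∧
    -- (3) φ ∘ t^F = t_F̃, with t^F(a) = (R^F₂ ▷ a) ⋊ R^F₁, R^F = F₂₁ R F⁻¹
    (∀ a : A, φ (tmap act a (TensorProduct.comm K H H F * R * Finv)) =
      tmap act a (R * Finv)) ∧
    -- (4) ε̃ ∘ φ = ε̃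
    (∀ x : A ⊗[K] H, epsSm K H A (φ x) = epsSm K H A x) ∧
    -- (5) (φ ⊗_{A_F} φ) ∘ Δ̃^F = Δ̃_F̃ ∘ φ, where
    --     Δ̃_F̃(z) = F̃^#(Δ̃(z) F̃⁻¹) = Σᵢⱼ ((1⋊F₁ⱼ)·z₍₁₎·(1⋊F̄₁ᵢ)) ⊗_{A_F} ((1⋊F₂ⱼ)·z₍₂₎·(1⋊F̄₂ᵢ))
    (∀ (p : ℕ) (f1 f2 : Fin p → H), F = ∑ j, f1 j ⊗ₜ[K] f2 j →
      ∀ (q : ℕ) (g1 g2 : Fin q → H), Finv = ∑ i, g1 i ⊗ₜ[K] g2 i →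
      ∀ x : A ⊗[K] H,
        IF.mkQ ((TensorProduct.map φ φ) (DF x)) =
          IF.mkQ (∑ j, ∑ i,
            (TensorProduct.map (m ((1 : A) ⊗ₜ[K] f1 j)) (m ((1 : A) ⊗ₜ[K] f2 j)))
              ((TensorProduct.map (m.flip ((1 : A) ⊗ₜ[K] g1 i))
                (m.flip ((1 : A) ⊗ₜ[K] g2 i))) (D (φ x))))) := by
  have hact_alg' : ∀ (L : H) (a b : A), act L (a * b) =
      LinearMap.mul' K A (map (act.flip a) (act.flip b) (Coalgebra.comul L)) := fun L a b => by
    obtain ⟨n, u, v, hu⟩ := exists_sum_tmul_eq (Coalgebra.comul (R := K) L)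
    simp [hact_alg L a b n u v hu, hu]
  have hm' := fun a b L J =>
    eq_map_of_forall_eq_sum (LinearMap.mulLeft K a ∘ₗ act.flip b) (LinearMap.mulRight K J)
      (hm a b L J)
  have hD' := fun a L =>
    eq_map_of_forall_eq_sum (TensorProduct.mk K A H a) (TensorProduct.mk K A H 1) (hD a L)
  have hDF' := fun a L =>
    eq_map_of_forall_eq_sum (TensorProduct.mk K A H a) (TensorProduct.mk K A H 1) (hDF a L)
  obtain rfl := eq_twistMap hφ
  obtain rfl := eq_twistMap hψ
  have hFinvL : ctL K H Finv = 1 := by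
    simpa [hinv₁, hnorm₁, ctL_one] using (ctL_mul K H F Finv).symm
  have hFinvR : ctR K H Finv = 1 := by
    simpa [hinv₁, hnorm₂, ctR_one] using (ctR_mul K H F Finv).symm
  refine ⟨twistMap_twistedMul hact_mul hact_alg'
      (copL_inv_mul_leg12_inv_mul_leg23 hinv₁ hinv₂ hcoc) hm' hmF,
    twistMap_one_tmul hact_unit hFinvL 1,
    fun x => by rw [twistMap_twistMap hact_mul, hinv₁, twistMap_one hact_one],
    fun x => by rw [twistMap_twistMap hact_mul, hinv₂, twistMap_one hact_one],
    fun a => by simp [← Algebra.TensorProduct.one_def, actLeft_apply],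
    twistMap_tmap hact_mul hinv₂ R,
    epsSm_twistMap hact_one hFinvR,
    fun p f1 f2 hF q g1 g2 hG x => congrArg IF.mkQ ?_⟩
  exact map_twistMap_twistedComul hact_one hact_mul hact_unit hFinvL
    (copL_mul_copR_inv hinv₁ hinv₂ hcoc) hm' hD' hDF' hF hG x

/-- main theorem: the Brzeziński–Militaru bialgebroid
`A_F ⋊ H^F` built from the twisted data `(H^F, R^F, A_F)` is isomorphic, via
`φ(a ⋊ L) = (F̄₁ ▷ a) ⋊ F̄₂L`, to the Xu twist `(A ⋊ H)^F̃` of the bialgebroid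
`A ⋊ H` by the lifted twist `F̃ = (1 ⋊ F₁) ⊗_A (1 ⋊ F₂)`: `φ` is an algebra
isomorphism of the total algebras intertwining sources, targets, counits and
(modulo the `⊗_{A_F}`-relations) the coproducts. -/
theorem twisted_bialgebroid_isomorphism
    {K H A : Type} [CommRing K] [Ring H] [Bialgebra K H] [Ring A] [Algebra K A]
    (act : H →ₗ[K] A →ₗ[K] A)
    (hact_one : ∀ a : A, act 1 a = a)
    (hact_mul : ∀ (L J : H) (a : A), act (L * J) a = act L (act J a))
    (hact_unit : ∀ L : H, act L (1 : A) = Coalgebra.counit (R := K) L • (1 : A))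
    (hact_alg : ∀ (L : H) (a b : A) (n : ℕ) (L1 L2 : Fin n → H),
      Coalgebra.comul (R := K) L = ∑ i, L1 i ⊗ₜ[K] L2 i →
      act L (a * b) = ∑ i, act (L1 i) a * act (L2 i) b)
    -- quasi-triangularity of (H, R)
    (R Rinv : H ⊗[K] H)
    (hR₁ : R * Rinv = 1) (hR₂ : Rinv * R = 1)
    (hRΔ : ∀ x : H,
      R * Coalgebra.comul (R := K) x * Rinv =
        TensorProduct.comm K H H (Coalgebra.comul (R := K) x))
    (hhex₁ : copL K H R = leg13 K H R * leg23 K H R)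
    (hhex₂ : copR K H R = leg13 K H R * leg12 K H R)
    (hRn₁ : ctL K H R = 1) (hRn₂ : ctR K H R = 1)
    -- A is braided commutative w.r.t. R
    (hbr : ∀ (a b : A) (n : ℕ) (r1 r2 : Fin n → H),
      R = ∑ i, r1 i ⊗ₜ[K] r2 i → a * b = ∑ i, act (r2 i) b * act (r1 i) a)
    -- F is a normalized cocycle twist
    (F Finv : H ⊗[K] H)
    (hinv₁ : F * Finv = 1) (hinv₂ : Finv * F = 1)
    (hcoc : leg12 K H F * copL K H F = leg23 K H F * copR K H F)
    (hnorm₁ : ctL K H F = 1) (hnorm₂ : ctR K H F = 1)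
    -- the smash product multiplication of A ⋊ H
    (m : (A ⊗[K] H) →ₗ[K] (A ⊗[K] H) →ₗ[K] (A ⊗[K] H))
    (hm : ∀ (a b : A) (L J : H) (n : ℕ) (L1 L2 : Fin n → H),
      Coalgebra.comul (R := K) L = ∑ i, L1 i ⊗ₜ[K] L2 i →
      m (a ⊗ₜ[K] L) (b ⊗ₜ[K] J) = ∑ i, (a * act (L1 i) b) ⊗ₜ[K] (L2 i * J))
    -- the smash product multiplication of A_F ⋊ H^F
    (mF : (A ⊗[K] H) →ₗ[K] (A ⊗[K] H) →ₗ[K] (A ⊗[K] H))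
    (hmF : ∀ (a b : A) (L J : H) (n : ℕ) (L1 L2 : Fin n → H),
      F * Coalgebra.comul (R := K) L * Finv = ∑ i, L1 i ⊗ₜ[K] L2 i →
      mF (a ⊗ₜ[K] L) (b ⊗ₜ[K] J) =
        ∑ i, starF act Finv a (act (L1 i) b) ⊗ₜ[K] (L2 i * J))
    -- the maps φ, ψ
    (φ ψ : A ⊗[K] H →ₗ[K] A ⊗[K] H)
    (hφ : ∀ (a : A) (L : H) (n : ℕ) (g1 g2 : Fin n → H),
      Finv = ∑ i, g1 i ⊗ₜ[K] g2 i →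
      φ (a ⊗ₜ[K] L) = ∑ i, act (g1 i) a ⊗ₜ[K] (g2 i * L))
    (hψ : ∀ (a : A) (L : H) (n : ℕ) (f1 f2 : Fin n → H),
      F = ∑ i, f1 i ⊗ₜ[K] f2 i →
      ψ (a ⊗ₜ[K] L) = ∑ i, act (f1 i) a ⊗ₜ[K] (f2 i * L))
    -- the (representatives of the) coproducts Δ̃ of A ⋊ H and Δ̃^F of A_F ⋊ H^F
    (D DF : (A ⊗[K] H) →ₗ[K] (A ⊗[K] H) ⊗[K] (A ⊗[K] H))
    (hD : ∀ (a : A) (L : H) (n : ℕ) (L1 L2 : Fin n → H),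
      Coalgebra.comul (R := K) L = ∑ i, L1 i ⊗ₜ[K] L2 i →
      D (a ⊗ₜ[K] L) = ∑ i, (a ⊗ₜ[K] L1 i) ⊗ₜ[K] ((1 : A) ⊗ₜ[K] L2 i))
    (hDF : ∀ (a : A) (L : H) (n : ℕ) (L1 L2 : Fin n → H),
      F * Coalgebra.comul (R := K) L * Finv = ∑ i, L1 i ⊗ₜ[K] L2 i →
      DF (a ⊗ₜ[K] L) = ∑ i, (a ⊗ₜ[K] L1 i) ⊗ₜ[K] ((1 : A) ⊗ₜ[K] L2 i))
    -- the submodule defining ⊗_{A_F}, built from the Xu-twisted source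
    -- s_F̃(b) = (F̄₁ ▷ b) ⋊ F̄₂ and target t_F̃(b) = (R₂F̄₂' ▷ b) ⋊ R₁F̄₁'
    (IF : Submodule K ((A ⊗[K] H) ⊗[K] (A ⊗[K] H)))
    (hIF : IF = Submodule.span K
      {z : (A ⊗[K] H) ⊗[K] (A ⊗[K] H) |
        ∃ (b : A) (x y : A ⊗[K] H),
          z = (m (tmap act b (R * Finv)) x) ⊗ₜ[K] y -
              x ⊗ₜ[K] (m ((TensorProduct.map (act.flip b) LinearMap.id) Finv) y)}) :
    -- (1) φ is an isomorphism of the total algebras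
    (∀ x y : A ⊗[K] H, φ (mF x y) = m (φ x) (φ y)) ∧
    φ ((1 : A) ⊗ₜ[K] (1 : H)) = (1 : A) ⊗ₜ[K] (1 : H) ∧
    (∀ x : A ⊗[K] H, ψ (φ x) = x) ∧ (∀ x : A ⊗[K] H, φ (ψ x) = x) ∧
    -- (2) φ ∘ s^F = s_F̃
    (∀ a : A, φ (a ⊗ₜ[K] (1 : H)) =
      (TensorProduct.map (act.flip a) LinearMap.id) Finv) ∧
    -- (3) φ ∘ t^F = t_F̃, with t^F(a) = (R^F₂ ▷ a) ⋊ R^F₁, R^F = F₂₁ R F⁻¹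
    (∀ a : A, φ (tmap act a (TensorProduct.comm K H H F * R * Finv)) =
      tmap act a (R * Finv)) ∧
    -- (4) ε̃ ∘ φ = ε̃
    (∀ x : A ⊗[K] H, epsSm K H A (φ x) = epsSm K H A x) ∧
    -- (5) (φ ⊗_{A_F} φ) ∘ Δ̃^F = Δ̃_F̃ ∘ φ, where
    --     Δ̃_F̃(z) = F̃^#(Δ̃(z) F̃⁻¹) = Σᵢⱼ ((1⋊F₁ⱼ)·z₍₁₎·(1⋊F̄₁ᵢ)) ⊗_{A_F} ((1⋊F₂ⱼ)·z₍₂₎·(1⋊F̄₂ᵢ))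
    (∀ (p : ℕ) (f1 f2 : Fin p → H), F = ∑ j, f1 j ⊗ₜ[K] f2 j →
      ∀ (q : ℕ) (g1 g2 : Fin q → H), Finv = ∑ i, g1 i ⊗ₜ[K] g2 i →
      ∀ x : A ⊗[K] H,
        IF.mkQ ((TensorProduct.map φ φ) (DF x)) =
          IF.mkQ (∑ j, ∑ i,
            (TensorProduct.map (m ((1 : A) ⊗ₜ[K] f1 j)) (m ((1 : A) ⊗ₜ[K] f2 j)))
              ((TensorProduct.map (m.flip ((1 : A) ⊗ₜ[K] g1 i))
                (m.flip ((1 : A) ⊗ₜ[K] g2 i))) (D (φ x))))) :=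
  twisted_bialgebroid_isomorphism_general act hact_one hact_mul hact_unit hact_alg R F Finv hinv₁
    hinv₂ hcoc hnorm₁ hnorm₂ m hm mF hmF φ ψ hφ hψ D DF hD hDF IF
end
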